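/- arXiv:math/0007001 — 2 statements merged into one kernel-verified Lean document; each statement's English description precedes it below -/
import Mathlib

section
/- The q-multinomial coefficient satisfies the symmetric recursion: [L choose i,j]_q = [L-1 choose i,j]_q + q^{L-i}[L-1 choose i-1,j]_q + q^{L-j}[L-1 choose i,j-1]_q + q^{L-i-j}(1-q^{L-1})[L-2 choose i-1,j-1]_q, for all integers L, i, j with i, j ≥ 0. -/
open Finset

noncomputable section

abbrev K : Type := RatFunc ℚ

def q : K := RatFunc.X

/-- Extended q-Pochhammer symbol `(a;q)_n` for integer `n`. -/
def poch (a : K) (n : ℤ) : K :=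
  if 0 ≤ n then ∏ j ∈ Finset.range n.toNat, (1 - a * q ^ j)
  else (∏ j ∈ Finset.range (-n).toNat, (1 - a * q ^ (-(j + 1 : ℤ))))⁻¹

/-- Extended Gaussian binomial coefficient `[n choose m]_q`. -/
def qbinom (n m : ℤ) : K :=
  if 0 ≤ m then poch (q ^ (n - m + 1)) m / poch q m else 0

/-- Triangular number `T_n = n(n+1)/2`. -/
def T (n : ℤ) : ℤ := n * (n + 1) / 2

/-- The q-multinomial coefficient `[L choose a,b]_q`. -/
def qmul2 (L a b : ℤ) : K := qbinom L a * qbinom (L - a) b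

/-!
Apply the q-Pascal rule `[n, m] = [n-1, m] + q^(n-m) [n-1, m-1]` to both factors of
`[L, i] [L-i, j]`. Expanding, three of the four products are already terms of the recursion;
in the remaining one, `q^(L-i-j) [L-1, i] [L-1-i, j-1]`, the absorption identity
`(1 - q^i) [L-1, i] = (1 - q^(L-1)) [L-2, i-1]` splits `[L-1, i]` into `q^i [L-1, i]`, which
raises the prefactor to `q^(L-j)`, plus the `[L-2, i-1]` term.
-/

lemma q_ne_zero : q ≠ 0 := RatFunc.X_ne_zero

lemma one_sub_q_pow_ne_zero {n : ℕ} (hn : n ≠ 0) : 1 - q ^ n ≠ 0 := by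
  rw [sub_ne_zero, ne_comm]
  intro h
  have hX : (Polynomial.X : Polynomial ℚ) ^ n = 1 := by
    apply RatFunc.algebraMap_injective ℚ
    rwa [map_pow, map_one, RatFunc.algebraMap_X]
  simpa [hn] using congrArg Polynomial.natDegree hX

def pochNat (a : K) (n : ℕ) : K := ∏ j ∈ range n, (1 - a * q ^ j)

lemma pochNat_succ (a : K) (n : ℕ) : pochNat a (n + 1) = pochNat a n * (1 - a * q ^ n) :=
  prod_range_succ _ _

lemma pochNat_succ' (a : K) (n : ℕ) : pochNat a (n + 1) = (1 - a) * pochNat (a * q) n := by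
  simp only [pochNat, prod_range_succ', pow_zero, mul_one, pow_succ, mul_assoc, mul_comm q]
  ring

lemma pochNat_q_ne_zero (n : ℕ) : pochNat q n ≠ 0 :=
  prod_ne_zero_iff.mpr fun j _ => by
    simpa only [← pow_succ'] using one_sub_q_pow_ne_zero (Nat.succ_ne_zero j)

lemma qbinom_natCast (n : ℤ) (m : ℕ) :
    qbinom n m = pochNat (q ^ (n - m + 1)) m / pochNat q m := by
  simp [qbinom, poch, pochNat]

lemma qbinom_zero (n : ℤ) : qbinom n 0 = 1 := by
  simpa [pochNat] using qbinom_natCast n 0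

lemma qbinom_of_neg (n : ℤ) {m : ℤ} (hm : m < 0) : qbinom n m = 0 :=
  if_neg hm.not_ge

theorem qbinom_pascal (n m : ℤ) :
    qbinom n m = qbinom (n - 1) m + q ^ (n - m) * qbinom (n - 1) (m - 1) := by
  rcases lt_or_ge m 0 with hm | hm
  · simp [qbinom_of_neg _ hm, qbinom_of_neg _ (show m - 1 < 0 by omega)]
  lift m to ℕ using hm
  cases m with
  | zero => simp [qbinom_zero, qbinom_of_neg]
  | succ k =>
    set y : K := q ^ (n - k - 1)
    have hk : ((k + 1 : ℕ) : ℤ) - 1 = k := by push_cast; ring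
    have hy : q ^ (n - k) = y * q := by rw [← zpow_add_one₀ q_ne_zero]; ring_nf
    rw [hk, qbinom_natCast, qbinom_natCast, qbinom_natCast]
    rw [show n - (k + 1 : ℕ) + 1 = n - k by push_cast; ring,
      show n - 1 - (k + 1 : ℕ) + 1 = n - k - 1 by push_cast; ring,
      show n - 1 - (k : ℕ) + 1 = n - k by ring,
      show n - ((k + 1 : ℕ) : ℤ) = n - k - 1 by push_cast; ring,
      hy, pochNat_succ (y * q), pochNat_succ' y, pochNat_succ q]
    have hP := pochNat_q_ne_zero k
    have hq := one_sub_q_pow_ne_zero (Nat.succ_ne_zero k)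
    rw [pow_succ'] at hq
    field_simp
    ring

theorem qbinom_absorption (n m : ℤ) :
    (1 - q ^ m) * qbinom n m = (1 - q ^ n) * qbinom (n - 1) (m - 1) := by
  rcases lt_or_ge m 0 with hm | hm
  · simp [qbinom_of_neg _ hm, qbinom_of_neg _ (show m - 1 < 0 by omega)]
  lift m to ℕ using hm
  cases m with
  | zero => simp [qbinom_of_neg]
  | succ k =>
    have hk : ((k + 1 : ℕ) : ℤ) - 1 = k := by push_cast; ring
    have hn : q ^ (n - k) * q ^ k = q ^ n := by
      rw [← zpow_natCast, ← zpow_add₀ q_ne_zero]; ring_nf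
    rw [hk, qbinom_natCast, qbinom_natCast,
      show n - (k + 1 : ℕ) + 1 = n - k by push_cast; ring,
      show n - 1 - (k : ℕ) + 1 = n - k by ring,
      pochNat_succ, pochNat_succ q k, ← hn, zpow_natCast, pow_succ']
    have hP := pochNat_q_ne_zero k
    have hq := one_sub_q_pow_ne_zero (Nat.succ_ne_zero k)
    rw [pow_succ'] at hq
    field_simp

theorem qmul2_recurrence_general (L i j : ℤ) :
    qmul2 L i j =
      qmul2 (L - 1) i j + q ^ (L - i) * qmul2 (L - 1) (i - 1) j +
        q ^ (L - j) * qmul2 (L - 1) i (j - 1) +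
        q ^ (L - i - j) * (1 - q ^ (L - 1)) * qmul2 (L - 2) (i - 1) (j - 1) := by
  have pascal_i := qbinom_pascal L i
  have pascal_j := qbinom_pascal (L - i) j
  have absorb := qbinom_absorption (L - 1) i
  have hq : q ^ (L - i - j) * q ^ i = q ^ (L - j) := by
    rw [← zpow_add₀ q_ne_zero]; ring_nf
  simp only [qmul2, show L - 1 - (i - 1) = L - i by ring, show L - 2 - (i - 1) = L - 1 - i by ring,
    show L - i - 1 = L - 1 - i by ring, show L - 1 - 1 = L - 2 by ring] at pascal_j absorb ⊢
  rw [pascal_i, pascal_j]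
  linear_combination q ^ (L - i - j) * qbinom (L - 1 - i) (j - 1) * absorb +
    qbinom (L - 1) i * qbinom (L - 1 - i) (j - 1) * hq

theorem qmul2_recurrence (L i j : ℤ) (hi : 0 ≤ i) (hj : 0 ≤ j) :
    qmul2 L i j =
      qmul2 (L - 1) i j + q ^ (L - i) * qmul2 (L - 1) (i - 1) j +
        q ^ (L - j) * qmul2 (L - 1) i (j - 1) +
        q ^ (L - i - j) * (1 - q ^ (L - 1)) * qmul2 (L - 2) (i - 1) (j - 1) :=
  qmul2_recurrence_general L i j
end
end

section
/- Boundary collapse: for all integers i, j, k ≥ 0 and M, the sum p_{i,j,k}(i+j-1, M) = ∑_{s≥0} q^{s(M+2) - T_s + T_{i-s} + T_{j-s} + T_{k-s}} [i+j-1-s choose s, i-s, j-s]_q [M-i-j choose k-s]_q equals δ_{i,0} δ_{j,0} q^{T_k} [M-i-j choose k]_q; i.e., it vanishes unless i = j = 0, in which case it equals q^{T_k}[M choose k]_q. -/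
open Finset

noncomputable section

/-- The q-multinomial coefficient `[L choose a,b,c]_q`. -/
def qmul3 (L a b c : ℤ) : K := qbinom L a * qbinom (L - a) b * qbinom (L - a - b) c

/-- The right-hand side `p_{i,j,k}(L,M)` of the key identity; the sum over `s ≥ 0`
is truncated at `s = i` since all further summands vanish. -/
def p (i j k L M : ℤ) : K :=
  ∑ s ∈ Finset.range (i.toNat + 1),
    q ^ ((s : ℤ) * (M + 2) - T s + T (i - s) + T (j - s) + T (k - s)) *
      qmul3 (L - s) s (i - s) (j - s) * qbinom (M - i - j) (k - s)

lemma qbinom_zero_of_lt {n m : ℤ} (hn : 0 ≤ n) (hnm : n < m) : qbinom n m = 0 := by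
  have hm : 0 ≤ m := le_trans hn hnm.le
  rw [qbinom, if_pos hm]
  have hmem : (m - 1 - n).toNat ∈ Finset.range m.toNat := by
    rw [Finset.mem_range]; omega
  have hz : poch (q ^ (n - m + 1)) m = 0 := by
    rw [poch, if_pos hm]
    refine Finset.prod_eq_zero hmem ?_
    have h1 : ((m - 1 - n).toNat : ℤ) = m - 1 - n := Int.toNat_of_nonneg (by omega)
    rw [← zpow_natCast q ((m - 1 - n).toNat), h1, ← zpow_add₀ q_ne_zero,
      show n - m + 1 + (m - 1 - n) = 0 by ring, zpow_zero, sub_self]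
  rw [hz, zero_div]

lemma qbinom_zero_of_neg {n m : ℤ} (hm : m < 0) : qbinom n m = 0 := by
  rw [qbinom, if_neg (not_le.mpr hm)]

theorem p_boundary (i j k M : ℤ) (hi : 0 ≤ i) (hj : 0 ≤ j) (hk : 0 ≤ k) :
    p i j k (i + j - 1) M =
      if i = 0 ∧ j = 0 then q ^ T k * qbinom (M - i - j) k else 0 := by
  by_cases h : i = 0 ∧ j = 0
  · obtain ⟨hi0, hj0⟩ := h
    subst hi0; subst hj0
    rw [if_pos ⟨rfl, rfl⟩]
    simp [p, T, qmul3, qbinom, poch]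
  · rw [if_neg h]
    refine Finset.sum_eq_zero fun s hs => ?_
    rw [Finset.mem_range] at hs
    have hsi : (s : ℤ) ≤ i := by omega
    have hs0 : (0 : ℤ) ≤ (s : ℤ) := Int.natCast_nonneg s
    rcases lt_trichotomy (s : ℤ) j with hlt | heq | hgt
    · rw [qmul3, show (i + j - 1 - (s : ℤ)) - s - (i - s) = j - 1 - s by ring,
        qbinom_zero_of_lt (n := j - 1 - (s : ℤ)) (m := j - s) (by omega) (by omega),
        mul_zero, mul_zero, zero_mul]
    · rcases eq_or_lt_of_le hsi with hie | hilt
      · -- i = s = j, and not both zero, so i = j ≥ 1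
        have hi1 : 1 ≤ i := by omega
        rw [qmul3, show i + j - 1 - (s : ℤ) = i - 1 by omega,
          qbinom_zero_of_lt (n := i - 1) (m := (s : ℤ)) (by omega) (by omega),
          zero_mul, zero_mul, mul_zero, zero_mul]
      · rw [qmul3, show (i + j - 1 - (s : ℤ)) - s = i - s - 1 by omega,
          qbinom_zero_of_lt (n := i - (s : ℤ) - 1) (m := i - s) (by omega) (by omega),
          mul_zero, zero_mul, mul_zero, zero_mul]
    · rw [qmul3, qbinom_zero_of_neg (show j - (s : ℤ) < 0 by omega),
        mul_zero, mul_zero, zero_mul]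
end
end
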